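/- arXiv:math/0302305 — 5 statements merged into one kernel-verified Lean document; each statement's English description precedes it below -/
import Mathlib

section
/- Let X_a, X_b be linear subspaces of ℝⁿ with X_a ∩ X_b = {0}, and let π^a, π^b denote the orthogonal projections onto the orthogonal complements X_a^⊥, X_b^⊥. Let μ > 0, δ > 0, let ψ : X_a^⊥ → ℂ be a Schwartz function, and let V : X_b^⊥ → ℂ be a function satisfying |V(w)| ≤ δ(1+‖w‖)^{−μ} for all w ∈ X_b^⊥. Then there exists a constant C > 0, depending only on X_a, X_b, μ and ψ (but not on V or δ), such that for all x ∈ ℝⁿ: |V(π^b x)| · |ψ(π^a x)| ≤ C δ (1+‖x‖)^{−μ}. -/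
/-!
Since `X_a ∩ X_b = {0}`, the map `x ↦ (π^a x, π^b x)` is injective, hence (in finite
dimension) anti-Lipschitz, so `1 + ‖x‖ ≲ (1 + ‖π^a x‖)(1 + ‖π^b x‖)`. A Schwartz function decays
at every rate, so `|V(π^b x)| |ψ(π^a x)| ≲ δ ((1 + ‖π^a x‖)(1 + ‖π^b x‖))^{-μ} ≲ δ (1 + ‖x‖)^{-μ}`.
-/

open Submodule

theorem SchwartzMap.exists_norm_le_mul_one_add_norm_rpow_neg {E F : Type*}
    [NormedAddCommGroup E] [NormedSpace ℝ E] [NormedAddCommGroup F] [NormedSpace ℝ F]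
    (f : SchwartzMap E F) (μ : ℝ) : ∃ B > 0, ∀ x, ‖f x‖ ≤ B * (1 + ‖x‖) ^ (-μ) := by
  set k := ⌈μ⌉₊
  set S := 2 ^ k * (Finset.Iic (k, 0)).sup (fun m => SchwartzMap.seminorm ℝ m.1 m.2) f
  refine ⟨S + 1, by positivity, fun x => ?_⟩
  have hdecay : (1 + ‖x‖) ^ k * ‖f x‖ ≤ S + 1 := by
    have := one_add_le_sup_seminorm_apply (𝕜 := ℝ) (m := (k, 0)) le_rfl le_rfl f x
    rw [norm_iteratedFDeriv_zero] at this
    linarith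
  calc ‖f x‖ ≤ (S + 1) * (1 + ‖x‖) ^ (-(k : ℝ)) := by
        rw [Real.rpow_neg (by positivity), Real.rpow_natCast, ← div_eq_mul_inv,
          le_div_iff₀ (by positivity), mul_comm]
        exact hdecay
    _ ≤ (S + 1) * (1 + ‖x‖) ^ (-μ) := by
        have hx : 1 ≤ 1 + ‖x‖ := le_add_of_nonneg_right (norm_nonneg x)
        gcongr
        exact Nat.le_ceil μ

theorem rpow_neg_le_mul_rpow_neg_of_le_mul {u v M μ : ℝ} (hu : 0 < u) (hM : 0 < M)
    (hμ : 0 ≤ μ) (h : u ≤ M * v) : v ^ (-μ) ≤ M ^ μ * u ^ (-μ) := by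
  have hv : u / M ≤ v := by rwa [div_le_iff₀ hM, mul_comm]
  calc v ^ (-μ) ≤ (u / M) ^ (-μ) :=
        Real.rpow_le_rpow_of_nonpos (div_pos hu hM) hv (neg_nonpos.mpr hμ)
    _ = M ^ μ * u ^ (-μ) := by
        rw [Real.div_rpow hu.le hM.le, Real.rpow_neg hM.le, div_inv_eq_mul, mul_comm]

section OrthogonalProjection

variable {E : Type*} [NormedAddCommGroup E] [InnerProductSpace ℝ E] [FiniteDimensional ℝ E]
  {Xa Xb : Submodule ℝ E}

theorem ker_orthogonalProjectionOnto_prod_orthogonal_eq_bot (h : Xa ⊓ Xb = ⊥) :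
    (Xaᗮ.orthogonalProjectionOnto.prod Xbᗮ.orthogonalProjectionOnto).ker = ⊥ := by
  rw [ContinuousLinearMap.ker_prod, ker_orthogonalProjectionOnto, ker_orthogonalProjectionOnto,
    orthogonal_orthogonal, orthogonal_orthogonal, h]

theorem exists_norm_le_mul_norm_orthogonalProjectionOnto_add (h : Xa ⊓ Xb = ⊥) :
    ∃ K : ℝ, ∀ x : E,
      ‖x‖ ≤ K * (‖Xaᗮ.orthogonalProjectionOnto x‖ + ‖Xbᗮ.orthogonalProjectionOnto x‖) := by
  set T := Xaᗮ.orthogonalProjectionOnto.prod Xbᗮ.orthogonalProjectionOnto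
  obtain ⟨K, -, hK⟩ := (T : E →ₗ[ℝ] Xaᗮ × Xbᗮ).exists_antilipschitzWith
    (ker_orthogonalProjectionOnto_prod_orthogonal_eq_bot h)
  refine ⟨K, fun x => ?_⟩
  calc ‖x‖ ≤ K * ‖T x‖ := by simpa using hK.le_mul_norm_sub 0 x
    _ ≤ K * (‖Xaᗮ.orthogonalProjectionOnto x‖ + ‖Xbᗮ.orthogonalProjectionOnto x‖) := by
        gcongr
        exact norm_prod_le_iff.mpr
          ⟨le_add_of_nonneg_right (norm_nonneg _), le_add_of_nonneg_left (norm_nonneg _)⟩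

theorem exists_one_add_norm_le_mul_one_add_norm_orthogonalProjectionOnto (h : Xa ⊓ Xb = ⊥) :
    ∃ M > 0, ∀ x : E, 1 + ‖x‖ ≤
      M * ((1 + ‖Xaᗮ.orthogonalProjectionOnto x‖) * (1 + ‖Xbᗮ.orthogonalProjectionOnto x‖)) := by
  obtain ⟨K, hK⟩ := exists_norm_le_mul_norm_orthogonalProjectionOnto_add h
  refine ⟨max 1 K, by positivity, fun x => ?_⟩
  have hM : 1 ≤ max 1 K := le_max_left 1 K
  have ha := norm_nonneg (Xaᗮ.orthogonalProjectionOnto x)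
  have hb := norm_nonneg (Xbᗮ.orthogonalProjectionOnto x)
  have hx : ‖x‖ ≤ max 1 K * (‖Xaᗮ.orthogonalProjectionOnto x‖ + ‖Xbᗮ.orthogonalProjectionOnto x‖) :=
    (hK x).trans (by gcongr; exact le_max_right 1 K)
  nlinarith [mul_nonneg (mul_nonneg ha hb) (zero_le_one.trans hM)]

end OrthogonalProjection

/-- If `X_a ∩ X_b = {0}`, a pulled-back decaying potential times a pulled-back
Schwartz bound state decays at rate `μ` on all of `ℝⁿ`, with a constant independent
of the potential `V` and of `δ`. -/
theorem potential_times_bound_state_decay (n : ℕ)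
    (Xa Xb : Submodule ℝ (EuclideanSpace ℝ (Fin n))) (hXab : Xa ⊓ Xb = ⊥)
    (μ : ℝ) (hμ : 0 < μ)
    (ψ : SchwartzMap Xaᗮ ℂ) :
    ∃ C : ℝ, 0 < C ∧ ∀ (δ : ℝ) (V : Xbᗮ → ℂ), 0 < δ →
      (∀ w : Xbᗮ, ‖V w‖ ≤ δ * (1 + ‖w‖) ^ (-μ)) →
      ∀ x : EuclideanSpace ℝ (Fin n),
        ‖V (orthogonalProjection Xbᗮ x)‖ * ‖ψ (orthogonalProjection Xaᗮ x)‖ ≤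
          C * δ * (1 + ‖x‖) ^ (-μ) := by
  obtain ⟨B, hB, hψ⟩ := ψ.exists_norm_le_mul_one_add_norm_rpow_neg μ
  obtain ⟨M, hM, hgeom⟩ := exists_one_add_norm_le_mul_one_add_norm_orthogonalProjectionOnto hXab
  refine ⟨B * M ^ μ, by positivity, fun δ V hδ hV x => ?_⟩
  set a := Xaᗮ.orthogonalProjectionOnto x
  set b := Xbᗮ.orthogonalProjectionOnto x
  calc ‖V b‖ * ‖ψ a‖ ≤ (δ * (1 + ‖b‖) ^ (-μ)) * (B * (1 + ‖a‖) ^ (-μ)) :=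
        mul_le_mul (hV b) (hψ a) (norm_nonneg _) (by positivity)
    _ = B * δ * ((1 + ‖a‖) * (1 + ‖b‖)) ^ (-μ) := by
        rw [Real.mul_rpow (by positivity) (by positivity)]
        ring
    _ ≤ B * δ * (M ^ μ * (1 + ‖x‖) ^ (-μ)) := by
        gcongr
        exact rpow_neg_le_mul_rpow_neg_of_le_mul (by positivity) hM hμ.le (hgeom x)
    _ = B * M ^ μ * δ * (1 + ‖x‖) ^ (-μ) := by ring
end

section
/- Let X_a, X_b be linear subspaces of ℝⁿ with X_a ∩ X_b = {0}, and let π^b denote the orthogonal projection onto X_b^⊥. Let μ > 0 and let ψ, φ : X_a^⊥ → ℂ be Schwartz functions. Then there exists a constant C > 0 such that for all x_a ∈ X_a: ∫_{X_a^⊥} (1+‖π^b(x_a + w)‖)^{−μ} |ψ(w)| |φ(w)| dw ≤ C (1+‖x_a‖)^{−μ}, where dw denotes Lebesgue measure on X_a^⊥. -/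
/-!
Since `X_a ∩ X_b = {0}`, the projection `π^b` is injective on the finite-dimensional `X_a`,
hence `‖x_a‖ ≤ C ‖π^b x_a‖`. As `π^b` is a contraction, a Peetre-type inequality gives
`1 + ‖x_a‖ ≤ (C + 1) (1 + ‖π^b (x_a + w)‖) (1 + ‖w‖)`, so the integrand is at most
`(C + 1)^μ (1 + ‖x_a‖)^(-μ)` times `(1 + ‖w‖)^μ |ψ w| |φ w|`, which is integrable because
`ψ` is a Schwartz function and `φ` is bounded.
-/

open Submodule MeasureTheory
open scoped NNReal

theorem Submodule.exists_norm_le_mul_norm_starProjection_orthogonal {𝕜 E : Type*} [RCLike 𝕜]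
    [NormedAddCommGroup E] [InnerProductSpace 𝕜 E] (U V : Submodule 𝕜 E)
    [FiniteDimensional 𝕜 U] [V.HasOrthogonalProjection] (hUV : U ⊓ V = ⊥) :
    ∃ C : ℝ≥0, ∀ x ∈ U, ‖x‖ ≤ C * ‖Vᗮ.starProjection x‖ := by
  have hker : LinearMap.ker (Vᗮ.starProjection.toLinearMap ∘ₗ U.subtype) = ⊥ := by
    refine LinearMap.ker_eq_bot'.mpr fun x hx => Subtype.ext ?_
    have hxV : Vᗮ.starProjection (x : E) = 0 := hx
    rw [starProjection_apply_eq_zero_iff, orthogonal_orthogonal] at hxV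
    have hxUV : (x : E) ∈ U ⊓ V := ⟨x.2, hxV⟩
    rwa [hUV, mem_bot] at hxUV
  obtain ⟨C, -, hC⟩ := LinearMap.exists_antilipschitzWith _ hker
  exact ⟨C, fun x hx => hC.le_mul_norm (map_zero _) ⟨x, hx⟩⟩

theorem one_add_norm_le_mul_one_add_norm_map_add {E F G : Type*} [SeminormedAddCommGroup E]
    [SeminormedAddCommGroup F] [FunLike G E F] [AddMonoidHomClass G E F] (T : G) {C : ℝ≥0}
    {x w : E} (hx : ‖x‖ ≤ C * ‖T x‖) (hw : ‖T w‖ ≤ ‖w‖) :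
    1 + ‖x‖ ≤ (C + 1) * ((1 + ‖T (x + w)‖) * (1 + ‖w‖)) := by
  have hTx : ‖T x‖ ≤ ‖T (x + w)‖ + ‖T w‖ := by
    simpa [map_add] using norm_sub_le (T (x + w)) (T w)
  calc 1 + ‖x‖ ≤ (C + 1) * (1 + ‖T x‖) := by nlinarith [C.coe_nonneg, norm_nonneg (T x)]
    _ ≤ (C + 1) * (1 + ‖T (x + w)‖ + ‖w‖) := by gcongr 1; linarith
    _ ≤ (C + 1) * ((1 + ‖T (x + w)‖) * (1 + ‖w‖)) := by
      gcongr; nlinarith [norm_nonneg (T (x + w)), norm_nonneg w]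

theorem Real.rpow_neg_le_of_le_mul_mul {a b c d μ : ℝ} (ha : 0 < a) (hc : 0 < c) (hd : 0 < d)
    (h : a ≤ b * (c * d)) (hμ : 0 ≤ μ) : c ^ (-μ) ≤ b ^ μ * a ^ (-μ) * d ^ μ := by
  have hb : 0 < b := pos_of_mul_pos_left (ha.trans_le h) (by positivity)
  have hinv : c⁻¹ ≤ b * d / a := by
    rw [inv_eq_one_div, div_le_div_iff₀ hc ha]; linarith
  calc c ^ (-μ) = c⁻¹ ^ μ := by rw [Real.rpow_neg hc.le, Real.inv_rpow hc.le]
    _ ≤ (b * d / a) ^ μ := Real.rpow_le_rpow (by positivity) hinv hμ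
    _ = b ^ μ * a ^ (-μ) * d ^ μ := by
      rw [Real.div_rpow (by positivity) ha.le, Real.mul_rpow hb.le hd.le, Real.rpow_neg ha.le]
      ring

namespace SchwartzMap

variable {D V W : Type*} [NormedAddCommGroup D] [NormedSpace ℝ D] [MeasurableSpace D]
  [BorelSpace D] [SecondCountableTopology D] [NormedAddCommGroup V] [NormedSpace ℝ V]
  [NormedAddCommGroup W] [NormedSpace ℝ W] {μ : Measure D} [μ.HasTemperateGrowth]

theorem integrable_one_add_norm_rpow_mul (f : 𝓢(D, V)) (r : ℝ) :
    Integrable (fun x => (1 + ‖x‖) ^ r * ‖f x‖) μ := by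
  set k := ⌈r⌉₊
  refine (((f.integrable_pow_mul μ 0).add (f.integrable_pow_mul μ k)).const_mul
    (2 ^ (k - 1))).mono'
    (((continuous_const.add continuous_norm).rpow_const fun x =>
      Or.inl (by positivity : 1 + ‖x‖ ≠ 0)).mul f.continuous.norm).aestronglyMeasurable
    (ae_of_all _ fun x => ?_)
  have hbase : 1 ≤ 1 + ‖x‖ := le_add_of_nonneg_right (norm_nonneg x)
  calc ‖(1 + ‖x‖) ^ r * ‖f x‖‖ = (1 + ‖x‖) ^ r * ‖f x‖ := by
        rw [Real.norm_of_nonneg (by positivity)]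
    _ ≤ (1 + ‖x‖) ^ k * ‖f x‖ := by
        gcongr
        exact_mod_cast Real.rpow_le_rpow_of_exponent_le hbase (Nat.le_ceil r)
    _ ≤ 2 ^ (k - 1) * (1 ^ k + ‖x‖ ^ k) * ‖f x‖ := by
        gcongr; exact add_pow_le zero_le_one (norm_nonneg x) k
    _ = 2 ^ (k - 1) * (‖x‖ ^ 0 * ‖f x‖ + ‖x‖ ^ k * ‖f x‖) := by ring

theorem integrable_one_add_norm_rpow_mul_norm_mul_norm (ψ : 𝓢(D, V)) (φ : 𝓢(D, W))
    (r : ℝ) :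
    Integrable (fun x => (1 + ‖x‖) ^ r * ‖ψ x‖ * ‖φ x‖) μ :=
  (ψ.integrable_one_add_norm_rpow_mul r).mul_bdd φ.continuous.norm.aestronglyMeasurable
    (ae_of_all _ fun x => by simpa using φ.norm_le_seminorm ℝ x)

end SchwartzMap

/-- Rapid decay of the matrix element `E_a I_a E_a`: pairing a potential decaying at
rate `μ` on `X_b^⊥` (with `X_a ∩ X_b = {0}`) against two Schwartz bound states on
`X_a^⊥` yields a function of `x_a ∈ X_a` decaying at the same rate `μ`. -/
theorem matrix_element_decay (n : ℕ)
    (Xa Xb : Submodule ℝ (EuclideanSpace ℝ (Fin n))) (hXab : Xa ⊓ Xb = ⊥)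
    (μ : ℝ) (hμ : 0 < μ)
    (ψ φ : SchwartzMap Xaᗮ ℂ) :
    ∃ C : ℝ, 0 < C ∧ ∀ xa : Xa,
      (∫ w : Xaᗮ,
          (1 + ‖(orthogonalProjection Xbᗮ ((xa : EuclideanSpace ℝ (Fin n)) + w) :
            EuclideanSpace ℝ (Fin n))‖) ^ (-μ) * ‖ψ w‖ * ‖φ w‖) ≤
        C * (1 + ‖(xa : EuclideanSpace ℝ (Fin n))‖) ^ (-μ) := by
  obtain ⟨C, hC⟩ := Xa.exists_norm_le_mul_norm_starProjection_orthogonal Xb hXab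
  set h : Xaᗮ → ℝ := fun w => (1 + ‖w‖) ^ μ * ‖ψ w‖ * ‖φ w‖
  have hint : Integrable h := ψ.integrable_one_add_norm_rpow_mul_norm_mul_norm φ μ
  have hh : 0 ≤ ∫ w, h w := integral_nonneg fun w => by positivity
  refine ⟨(C + 1 : ℝ) ^ μ * ((∫ w, h w) + 1), by positivity, fun xa => ?_⟩
  set A := 1 + ‖(xa : EuclideanSpace ℝ (Fin n))‖
  have hpointwise (w : Xaᗮ) :
      (1 + ‖Xbᗮ.starProjection (xa + w)‖) ^ (-μ) * ‖ψ w‖ * ‖φ w‖ ≤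
        (C + 1 : ℝ) ^ μ * A ^ (-μ) * h w := by
    have hdecay := Real.rpow_neg_le_of_le_mul_mul (by positivity) (by positivity) (by positivity)
      (one_add_norm_le_mul_one_add_norm_map_add Xbᗮ.starProjection (hC xa xa.2)
        (Xbᗮ.norm_starProjection_apply_le w)) hμ.le
    calc _ ≤ (C + 1 : ℝ) ^ μ * A ^ (-μ) * (1 + ‖w‖) ^ μ * ‖ψ w‖ * ‖φ w‖ := by
          gcongr; exact hdecay
      _ = _ := by ring
  simp only [coe_orthogonalProjectionOnto_apply]
  calc _ ≤ ∫ w, (C + 1 : ℝ) ^ μ * A ^ (-μ) * h w :=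
        integral_mono_of_nonneg (ae_of_all _ fun w => by positivity) (hint.const_mul _)
          (ae_of_all _ hpointwise)
    _ = (C + 1 : ℝ) ^ μ * (∫ w, h w) * A ^ (-μ) := by rw [integral_const_mul]; ring
    _ ≤ _ := by gcongr; linarith
end

section
/- Let X_a, X_b be linear subspaces of ℝⁿ with X_a ∩ X_b = {0}, let π^a, π^b denote the orthogonal projections onto X_a^⊥, X_b^⊥, and let μ > dim X_a. Let ψ : X_a^⊥ → ℂ be a Schwartz function and let V : X_b^⊥ → ℂ be a measurable function satisfying |V(w)| ≤ δ(1+‖w‖)^{−μ} for all w ∈ X_b^⊥ and some δ > 0. Then the function x ↦ V(π^b x) |ψ(π^a x)|² is Lebesgue integrable on ℝⁿ, and the effective interaction V_eff : X_a → ℂ defined by V_eff(x_a) = ∫_{X_a^⊥} V(π^b(x_a + w)) |ψ(w)|² dw is a well-defined Lebesgue integrable function on X_a. -/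
/-!
Writing `x = x_a + w` with `x_a ∈ X_a`, `w ∈ X_aᗮ` identifies Lebesgue measure on `ℝⁿ` with the
product measure on `X_a × X_aᗮ`. Since `X_a ∩ X_b = 0`, the projection `π^b` is injective on
`X_a`, so `1 + ‖π^b x_a‖ ≳ 1 + ‖x_a‖`, and Peetre's inequality
`(1 + ‖u + v‖)^{-μ} ≤ (1 + ‖u‖)^{-μ} (1 + ‖v‖)^μ` gives
`|V(π^b(x_a + w))| |ψ(w)|² ≲ (1 + ‖x_a‖)^{-μ} · (1 + ‖w‖)^μ |ψ(w)|²`.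
The first factor is integrable on `X_a` because `μ > dim X_a`, the second on `X_aᗮ` because `ψ`
is a Schwartz function, and Fubini gives the three claims.
-/

open Submodule MeasureTheory
open scoped SchwartzMap

theorem one_add_norm_add_rpow_neg_le {E : Type*} [SeminormedAddCommGroup E] {μ : ℝ} (hμ : 0 ≤ μ)
    (u v : E) : (1 + ‖u + v‖) ^ (-μ) ≤ (1 + ‖u‖) ^ (-μ) * (1 + ‖v‖) ^ μ := by
  have hle : 1 + ‖u‖ ≤ (1 + ‖u + v‖) * (1 + ‖v‖) := by
    nlinarith [norm_le_add_norm_add u v, norm_nonneg (u + v), norm_nonneg v]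
  calc (1 + ‖u + v‖) ^ (-μ) ≤ ((1 + ‖u‖) / (1 + ‖v‖)) ^ (-μ) :=
        Real.rpow_le_rpow_of_nonpos (by positivity) ((div_le_iff₀ (by positivity)).2 hle)
          (neg_nonpos.2 hμ)
    _ = (1 + ‖u‖) ^ (-μ) * (1 + ‖v‖) ^ μ := by
        rw [Real.div_rpow (by positivity) (by positivity), div_eq_mul_inv,
          ← Real.rpow_neg (by positivity), neg_neg]

theorem LinearMap.exists_one_add_norm_le_mul_one_add_norm_apply {E F : Type*}
    [NormedAddCommGroup E] [NormedSpace ℝ E] [FiniteDimensional ℝ E]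
    [NormedAddCommGroup F] [NormedSpace ℝ F] (f : E →ₗ[ℝ] F) (hf : LinearMap.ker f = ⊥) :
    ∃ C > 0, ∀ x, 1 + ‖x‖ ≤ C * (1 + ‖f x‖) := by
  obtain ⟨K, -, hK⟩ := f.exists_antilipschitzWith hf
  refine ⟨max 1 K, by positivity, fun x => ?_⟩
  have hx : ‖x‖ ≤ K * ‖f x‖ := hK.le_mul_norm (map_zero f) x
  nlinarith [le_max_left 1 (K : ℝ), le_max_right 1 (K : ℝ), norm_nonneg (f x)]

theorem LinearMap.exists_one_add_norm_apply_rpow_neg_le {E F : Type*}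
    [NormedAddCommGroup E] [NormedSpace ℝ E] [FiniteDimensional ℝ E]
    [NormedAddCommGroup F] [NormedSpace ℝ F] (f : E →ₗ[ℝ] F) (hf : LinearMap.ker f = ⊥)
    {μ : ℝ} (hμ : 0 ≤ μ) :
    ∃ C, ∀ x, (1 + ‖f x‖) ^ (-μ) ≤ C * (1 + ‖x‖) ^ (-μ) := by
  obtain ⟨C, hC, hCf⟩ := f.exists_one_add_norm_le_mul_one_add_norm_apply hf
  refine ⟨C ^ μ, fun x => ?_⟩
  calc (1 + ‖f x‖) ^ (-μ) ≤ ((1 + ‖x‖) / C) ^ (-μ) :=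
        Real.rpow_le_rpow_of_nonpos (by positivity) ((div_le_iff₀' hC).2 (hCf x)) (neg_nonpos.2 hμ)
    _ = C ^ μ * (1 + ‖x‖) ^ (-μ) := by
        rw [Real.div_rpow (by positivity) hC.le, Real.rpow_neg hC.le μ, div_eq_mul_inv, inv_inv,
          mul_comm]

namespace SchwartzMap

variable {D V : Type*} [NormedAddCommGroup D] [NormedSpace ℝ D] [NormedAddCommGroup V]
  [NormedSpace ℝ V]

theorem exists_one_add_norm_pow_mul_norm_le (f : 𝓢(D, V)) (k : ℕ) :
    ∃ C, ∀ x, (1 + ‖x‖) ^ k * ‖f x‖ ≤ C :=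
  ⟨_, fun x => by
    simpa using one_add_le_sup_seminorm_apply (𝕜 := ℝ) (m := (k, 0)) le_rfl le_rfl f x⟩

theorem integrable_one_add_norm_rpow_mul_norm_sq [MeasurableSpace D] [BorelSpace D]
    [SecondCountableTopology D] (μ : Measure D) [μ.HasTemperateGrowth] (f : 𝓢(D, V)) (r : ℝ) :
    Integrable (fun x => (1 + ‖x‖) ^ r * ‖f x‖ ^ 2) μ := by
  obtain ⟨C, hC⟩ := f.exists_one_add_norm_pow_mul_norm_le ⌈r⌉₊
  refine (f.integrable.norm.const_mul C).mono'
    ((by fun_prop : Measurable fun x : D => (1 + ‖x‖) ^ r).mul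
      (f.continuous.norm.pow 2).measurable).aestronglyMeasurable
    (Filter.Eventually.of_forall fun x => ?_)
  have hr : (1 + ‖x‖) ^ r ≤ (1 + ‖x‖) ^ ⌈r⌉₊ := by
    rw [← Real.rpow_natCast]
    exact Real.rpow_le_rpow_of_exponent_le (by simp) (Nat.le_ceil r)
  calc ‖(1 + ‖x‖) ^ r * ‖f x‖ ^ 2‖ = (1 + ‖x‖) ^ r * ‖f x‖ * ‖f x‖ := by
        rw [Real.norm_of_nonneg (by positivity)]; ring
    _ ≤ C * ‖f x‖ := by gcongr; exact (mul_le_mul_of_nonneg_right hr (norm_nonneg _)).trans (hC x)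

end SchwartzMap

variable {E : Type*} [NormedAddCommGroup E] [InnerProductSpace ℝ E] [FiniteDimensional ℝ E]

theorem Submodule.measurePreserving_add_orthogonal [MeasurableSpace E] [BorelSpace E]
    (K : Submodule ℝ E) :
    MeasurePreserving (fun z : K × Kᗮ => (z.1 : E) + z.2) (volume.prod volume) volume := by
  have hsum : (fun z : K × Kᗮ => (z.1 : E) + z.2) =
      K.orthogonalDecomposition.symm ∘ WithLp.toLp 2 := by
    ext z
    simp
  rw [hsum]
  exact K.orthogonalDecomposition.symm.measurePreserving.comp (WithLp.volume_preserving_toLp K Kᗮ)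

namespace Submodule

variable {A B : Submodule ℝ E}

theorem orthogonalProjectionOnto_orthogonal_coe_add (a : A) (w : Aᗮ) :
    Aᗮ.orthogonalProjectionOnto ((a : E) + w) = w := by
  rw [map_add, orthogonalProjectionOnto_orthogonal_apply_eq_zero a.2,
    orthogonalProjectionOnto_mem_subspace_eq_self, zero_add]

theorem ker_orthogonalProjectionOnto_orthogonal_comp_subtype (hAB : A ⊓ B = ⊥) :
    LinearMap.ker ((Bᗮ.orthogonalProjectionOnto : E →ₗ[ℝ] Bᗮ) ∘ₗ A.subtype) = ⊥ := by
  rw [LinearMap.ker_eq_bot']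
  intro a ha
  have hB : (a : E) ∈ B := by
    rw [← B.orthogonal_orthogonal, ← orthogonalProjectionOnto_eq_zero_iff]
    exact ha
  have hAB' : (a : E) ∈ A ⊓ B := ⟨a.2, hB⟩
  rw [hAB, mem_bot] at hAB'
  exact Subtype.ext hAB'

theorem exists_one_add_norm_orthogonalProjectionOnto_add_rpow_neg_le (hAB : A ⊓ B = ⊥)
    {μ : ℝ} (hμ : 0 ≤ μ) :
    ∃ C, ∀ (a : A) (w : E), (1 + ‖Bᗮ.orthogonalProjectionOnto ((a : E) + w)‖) ^ (-μ) ≤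
      C * (1 + ‖a‖) ^ (-μ) * (1 + ‖w‖) ^ μ := by
  obtain ⟨C, hC⟩ := LinearMap.exists_one_add_norm_apply_rpow_neg_le _
    (ker_orthogonalProjectionOnto_orthogonal_comp_subtype hAB) hμ
  refine ⟨C, fun a w => ?_⟩
  have hw : (1 + ‖Bᗮ.orthogonalProjectionOnto w‖) ^ μ ≤ (1 + ‖w‖) ^ μ := by
    gcongr; exact norm_orthogonalProjectionOnto_apply_le _ w
  rw [map_add]
  exact (one_add_norm_add_rpow_neg_le hμ _ _).trans
    (mul_le_mul (hC a) hw (by positivity) (le_trans (by positivity) (hC a)))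

theorem exists_norm_interaction_le (hAB : A ⊓ B = ⊥) {μ δ : ℝ} (hμ : 0 ≤ μ) {V : Bᗮ → ℂ}
    (hV : ∀ w, ‖V w‖ ≤ δ * (1 + ‖w‖) ^ (-μ)) (φ : Aᗮ → ℂ) :
    ∃ C, ∀ (a : A) (w : Aᗮ), ‖V (Bᗮ.orthogonalProjectionOnto ((a : E) + w)) * (‖φ w‖ : ℂ) ^ 2‖ ≤
      C * (1 + ‖a‖) ^ (-μ) * ((1 + ‖w‖) ^ μ * ‖φ w‖ ^ 2) := by
  have hδ : 0 ≤ δ := by simpa using (norm_nonneg _).trans (hV 0)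
  obtain ⟨C, hC⟩ := exists_one_add_norm_orthogonalProjectionOnto_add_rpow_neg_le hAB hμ
  refine ⟨δ * C, fun a w => ?_⟩
  calc ‖V (Bᗮ.orthogonalProjectionOnto ((a : E) + w)) * (‖φ w‖ : ℂ) ^ 2‖
      ≤ δ * (1 + ‖Bᗮ.orthogonalProjectionOnto ((a : E) + w)‖) ^ (-μ) * ‖φ w‖ ^ 2 := by
        rw [norm_mul, norm_pow, Complex.norm_real, norm_norm]
        gcongr
        exact hV _
    _ ≤ δ * (C * (1 + ‖a‖) ^ (-μ) * (1 + ‖w‖) ^ μ) * ‖φ w‖ ^ 2 := by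
        gcongr
        exact hC a w
    _ = δ * C * (1 + ‖a‖) ^ (-μ) * ((1 + ‖w‖) ^ μ * ‖φ w‖ ^ 2) := by ring

variable [MeasurableSpace E] [BorelSpace E]

theorem measurable_interaction {V : Bᗮ → ℂ} (hVmeas : Measurable V) (ψ : 𝓢(Aᗮ, ℂ)) :
    Measurable (fun z : A × Aᗮ =>
      V (Bᗮ.orthogonalProjectionOnto ((z.1 : E) + z.2)) * (‖ψ z.2‖ : ℂ) ^ 2) :=
  (hVmeas.comp (by fun_prop)).mul
    ((Complex.continuous_ofReal.comp (ψ.continuous.comp continuous_snd).norm).pow 2).measurable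

theorem integrable_interaction_prod (hAB : A ⊓ B = ⊥) {μ δ : ℝ}
    (hμ : (Module.finrank ℝ A : ℝ) < μ) (ψ : 𝓢(Aᗮ, ℂ)) {V : Bᗮ → ℂ} (hVmeas : Measurable V)
    (hV : ∀ w, ‖V w‖ ≤ δ * (1 + ‖w‖) ^ (-μ)) :
    Integrable (fun z : A × Aᗮ =>
      V (Bᗮ.orthogonalProjectionOnto ((z.1 : E) + z.2)) * (‖ψ z.2‖ : ℂ) ^ 2)
      (volume.prod volume) := by
  obtain ⟨C, hC⟩ := exists_norm_interaction_le hAB ((Nat.cast_nonneg _).trans hμ.le) hV ψ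
  have hdom := ((integrable_one_add_norm (μ := volume) hμ).mul_prod
    (ψ.integrable_one_add_norm_rpow_mul_norm_sq volume μ)).const_mul C
  exact hdom.mono' (measurable_interaction hVmeas ψ).aestronglyMeasurable
    (Filter.Eventually.of_forall fun z => (hC z.1 z.2).trans_eq (mul_assoc _ _ _))

theorem integrable_interaction_slice (hAB : A ⊓ B = ⊥) {μ δ : ℝ} (hμ : 0 ≤ μ)
    (ψ : 𝓢(Aᗮ, ℂ)) {V : Bᗮ → ℂ} (hVmeas : Measurable V)
    (hV : ∀ w, ‖V w‖ ≤ δ * (1 + ‖w‖) ^ (-μ)) (a : A) :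
    Integrable (fun w : Aᗮ =>
      V (Bᗮ.orthogonalProjectionOnto ((a : E) + w)) * (‖ψ w‖ : ℂ) ^ 2) := by
  obtain ⟨C, hC⟩ := exists_norm_interaction_le hAB hμ hV ψ
  exact ((ψ.integrable_one_add_norm_rpow_mul_norm_sq volume μ).const_mul _).mono'
    ((measurable_interaction hVmeas ψ).comp measurable_prodMk_left).aestronglyMeasurable
    (Filter.Eventually.of_forall (hC a))

end Submodule

theorem effective_interaction_integrable_general (n : ℕ)
    (Xa Xb : Submodule ℝ (EuclideanSpace ℝ (Fin n))) (hXab : Xa ⊓ Xb = ⊥)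
    (μ : ℝ) (hμ : (Module.finrank ℝ Xa : ℝ) < μ)
    (ψ : SchwartzMap Xaᗮ ℂ)
    (δ : ℝ)
    (V : Xbᗮ → ℂ) (hVmeas : Measurable V)
    (hV : ∀ w : Xbᗮ, ‖V w‖ ≤ δ * (1 + ‖w‖) ^ (-μ))
    (Veff : Xa → ℂ)
    (hVeff : ∀ xa : Xa, Veff xa =
      ∫ w : Xaᗮ,
        V (orthogonalProjection Xbᗮ ((xa : EuclideanSpace ℝ (Fin n)) + w)) *
          (‖ψ w‖ : ℂ) ^ 2) :
    Integrable (fun x : EuclideanSpace ℝ (Fin n) =>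
        V (orthogonalProjection Xbᗮ x) * (‖ψ (orthogonalProjection Xaᗮ x)‖ : ℂ) ^ 2) ∧
    (∀ xa : Xa, Integrable (fun w : Xaᗮ =>
        V (orthogonalProjection Xbᗮ ((xa : EuclideanSpace ℝ (Fin n)) + w)) *
          (‖ψ w‖ : ℂ) ^ 2)) ∧
    Integrable Veff := by
  have hprod := integrable_interaction_prod hXab hμ ψ hVmeas hV
  refine ⟨?_, integrable_interaction_slice hXab ((Nat.cast_nonneg _).trans hμ.le) ψ hVmeas hV, ?_⟩
  · have hmeas : Measurable fun x : EuclideanSpace ℝ (Fin n) =>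
        V (Xbᗮ.orthogonalProjectionOnto x) * (‖ψ (Xaᗮ.orthogonalProjectionOnto x)‖ : ℂ) ^ 2 :=
      (hVmeas.comp (by fun_prop)).mul
        ((Complex.continuous_ofReal.comp (ψ.continuous.comp (by fun_prop)).norm).pow 2).measurable
    refine ((measurePreserving_add_orthogonal Xa).integrable_comp hmeas.aestronglyMeasurable).1 ?_
    simpa only [Function.comp_def, orthogonalProjectionOnto_orthogonal_coe_add] using hprod
  · rw [show Veff = _ from funext hVeff]
    exact hprod.integral_prod_left

/-- Integrability of the intercluster interaction against the square of a bound state,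
and integrability of the resulting effective interaction on `X_a`, when the decay rate
`μ` exceeds `dim X_a`. -/
theorem effective_interaction_integrable (n : ℕ)
    (Xa Xb : Submodule ℝ (EuclideanSpace ℝ (Fin n))) (hXab : Xa ⊓ Xb = ⊥)
    (μ : ℝ) (hμ : (Module.finrank ℝ Xa : ℝ) < μ)
    (ψ : SchwartzMap Xaᗮ ℂ)
    (δ : ℝ) (hδ : 0 < δ)
    (V : Xbᗮ → ℂ) (hVmeas : Measurable V)
    (hV : ∀ w : Xbᗮ, ‖V w‖ ≤ δ * (1 + ‖w‖) ^ (-μ))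
    (Veff : Xa → ℂ)
    (hVeff : ∀ xa : Xa, Veff xa =
      ∫ w : Xaᗮ,
        V (orthogonalProjection Xbᗮ ((xa : EuclideanSpace ℝ (Fin n)) + w)) *
          (‖ψ w‖ : ℂ) ^ 2) :
    Integrable (fun x : EuclideanSpace ℝ (Fin n) =>
        V (orthogonalProjection Xbᗮ x) * (‖ψ (orthogonalProjection Xaᗮ x)‖ : ℂ) ^ 2) ∧
    (∀ xa : Xa, Integrable (fun w : Xaᗮ =>
        V (orthogonalProjection Xbᗮ ((xa : EuclideanSpace ℝ (Fin n)) + w)) *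
          (‖ψ w‖ : ℂ) ^ 2)) ∧
    Integrable Veff :=
  effective_interaction_integrable_general n Xa Xb hXab μ hμ ψ δ V hVmeas hV Veff hVeff
end

section
/- Let k ≥ 1, let ν ∈ ℝᵏ be a unit vector, let ρ_⊥ ∈ ℝᵏ satisfy ⟨ν, ρ_⊥⟩ = 0, let ε ∈ ℝ, and let z ∈ ℂ with Re z ≠ 0 and Im z ≠ 0. For ξ ∈ ℝᵏ define F(ξ) = ε − ‖ξ‖² − 2(z⟨ν,ξ⟩ + ⟨ρ_⊥,ξ⟩) ∈ ℂ. If Re F(ξ) > ε + ‖ρ_⊥‖², then |Im F(ξ)| > (Re F(ξ) − (ε + ‖ρ_⊥‖²)) · |Im z| / |Re z|. -/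
open scoped RealInnerProductSpace

/-- The spectral parameter `F(ξ) = ε − ‖ξ‖² − 2ρ·ξ`, `ρ = zν + ρ_⊥`, stays away from
the real axis: if `Re F(ξ) > ε + ‖ρ_⊥‖²` then
`|Im F(ξ)| > (Re F(ξ) − (ε + ‖ρ_⊥‖²))·|Im z|/|Re z|`. -/
theorem spectral_parameter_imaginary_part_bound (k : ℕ) (hk : 1 ≤ k)
    (ν : EuclideanSpace ℝ (Fin k)) (hν : ‖ν‖ = 1)
    (ρperp : EuclideanSpace ℝ (Fin k)) (hperp : ⟪ν, ρperp⟫ = 0)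
    (ε : ℝ) (z : ℂ) (hre : z.re ≠ 0) (him : z.im ≠ 0)
    (F : EuclideanSpace ℝ (Fin k) → ℂ)
    (hF : ∀ ξ, F ξ = (ε : ℂ) - (‖ξ‖ : ℂ) ^ 2 - 2 * (z * (⟪ν, ξ⟫ : ℝ) + (⟪ρperp, ξ⟫ : ℝ))) :
    ∀ ξ, ε + ‖ρperp‖ ^ 2 < (F ξ).re →
      ((F ξ).re - (ε + ‖ρperp‖ ^ 2)) * |z.im| / |z.re| < |(F ξ).im| := by
  intro ξ hgt
  set a : ℝ := ⟪ν, ξ⟫ with ha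
  set b : ℝ := ⟪ρperp, ξ⟫ with hb
  have hre' : (F ξ).re = ε - ‖ξ‖ ^ 2 - 2 * (z.re * a + b) := by
    rw [hF ξ]
    simp only [← Complex.ofReal_pow, Complex.sub_re, Complex.mul_re, Complex.mul_im, Complex.add_re, Complex.add_im,
      Complex.ofReal_re, Complex.ofReal_im, Complex.re_ofNat, Complex.im_ofNat, ← ha, ← hb]
    ring
  have him' : (F ξ).im = -(2 * (z.im * a)) := by
    rw [hF ξ]
    simp only [← Complex.ofReal_pow, Complex.sub_im, Complex.mul_re, Complex.mul_im, Complex.add_re, Complex.add_im,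
      Complex.ofReal_re, Complex.ofReal_im, Complex.re_ofNat, Complex.im_ofNat, ← ha, ← hb]
    ring
  -- key: a^2 ≤ ‖ξ‖^2 + 2*b + ‖ρperp‖^2
  have hkey : a ^ 2 ≤ ‖ξ‖ ^ 2 + 2 * b + ‖ρperp‖ ^ 2 := by
    have h0 : (0:ℝ) ≤ ‖(ξ - a • ν) + ρperp‖ ^ 2 := sq_nonneg _
    have hexp : ‖(ξ - a • ν) + ρperp‖ ^ 2
        = ‖ξ‖ ^ 2 - a ^ 2 + 2 * b + ‖ρperp‖ ^ 2 := by
      rw [norm_add_sq_real, norm_sub_sq_real, norm_smul]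
      simp only [inner_sub_left, real_inner_smul_left, real_inner_smul_right,
        real_inner_comm ξ ν, real_inner_comm ξ ρperp, hperp, ← ha, ← hb, hν,
        Real.norm_eq_abs, mul_pow, sq_abs, mul_one, mul_zero, one_pow]
      rw [real_inner_comm ν ξ, real_inner_comm ρperp ξ, ← ha, ← hb]
      ring
    nlinarith [h0, hexp]
  have hane : a ≠ 0 := by
    intro h
    rw [hre', h] at hgt
    nlinarith [hkey, h]
  have hapos : 0 < |a| := abs_pos.mpr hane
  have hrpos : 0 < |z.re| := abs_pos.mpr hre
  have hipos : 0 < |z.im| := abs_pos.mpr him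
  have habs : |(F ξ).im| = 2 * |z.im| * |a| := by
    rw [him', abs_neg, abs_mul, abs_mul, abs_two, mul_assoc]
  have hR : (F ξ).re - (ε + ‖ρperp‖ ^ 2) < 2 * |z.re| * |a| := by
    rw [hre']
    nlinarith [hkey, abs_mul_abs_self z.re, abs_mul_abs_self a, sq_abs a,
      neg_abs_le (z.re * a), abs_mul z.re a, sq_nonneg a]
  rw [habs, div_lt_iff₀ hrpos]
  have hRpos : 0 < (F ξ).re - (ε + ‖ρperp‖ ^ 2) := by linarith
  nlinarith [mul_lt_mul_of_pos_right hR hipos]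
end

section
/- Let k ≥ 1, let ν ∈ ℝᵏ be a unit vector, let ρ_⊥ ∈ ℝᵏ satisfy ⟨ν, ρ_⊥⟩ = 0, let ε ∈ ℝ, and let z ∈ ℂ with Im z ≠ 0. For ξ ∈ ℝᵏ define F(ξ) = ε − ‖ξ‖² − 2(z⟨ν,ξ⟩ + ⟨ρ_⊥,ξ⟩) ∈ ℂ, and write ξ_⊥ = ξ − ⟨ν,ξ⟩ν. Then: (i) F is differentiable and its derivative at ξ, viewed as a real-linear map from ℝᵏ to ℂ ≅ ℝ², is surjective if and only if ξ_⊥ ≠ −ρ_⊥; (ii) if ξ_⊥ = −ρ_⊥ and Im F(ξ) = 0, then ⟨ν,ξ⟩ = 0 and F(ξ) = ε + ‖ρ_⊥‖². -/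
/-!
The differential is `dF(ξ) h = -2 (⟪ξ + ρ⊥, h⟫ + z ⟪ν, h⟫)`. Splitting `ξ + ρ⊥ = w + s ν` with
`w ⟂ ν`, this is `-2 (⟪w, h⟫ + (s + z) ⟪ν, h⟫)`. Since `Im (s + z) ≠ 0`, the numbers `1` and `s + z`
span `ℂ` over `ℝ`, so the differential is onto exactly when `w = ξ⊥ + ρ⊥` is nonzero; when `w = 0`
its image is the real line through `s + z`. If `ξ = t ν - ρ⊥`, then
`F ξ = ε + ‖ρ⊥‖² - t² - 2 z t`, whose imaginary part `-2 t Im z` vanishes only for `t = 0`.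
-/

open scoped RealInnerProductSpace

namespace SpectralParameter

variable {E : Type*} [NormedAddCommGroup E] [InnerProductSpace ℝ E]

/-- `h ↦ (u + z ν) · h`, the real dot product extended complex-linearly in its first argument. -/
noncomputable def innerPair (z : ℂ) (u ν : E) : E →L[ℝ] ℂ :=
  Complex.ofRealCLM ∘L innerSL ℝ u + z • Complex.ofRealCLM ∘L innerSL ℝ ν

@[simp]
lemma innerPair_apply (z : ℂ) (u ν h : E) : innerPair z u ν h = ⟪u, h⟫ + z * ⟪ν, h⟫ := rfl

lemma innerPair_eq_sub_smul (z : ℂ) (u ν : E) :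
    innerPair z u ν = innerPair (⟪ν, u⟫ + z) (u - ⟪ν, u⟫ • ν) ν := by
  ext h
  simp only [innerPair_apply, inner_sub_left, real_inner_smul_left, real_inner_comm u ν]
  push_cast; ring

lemma innerPair_surjective_iff_of_inner_eq_zero {ν w : E} (hν : ‖ν‖ = 1) (hwν : ⟪w, ν⟫ = 0)
    {c : ℂ} (hc : c.im ≠ 0) : Function.Surjective (innerPair c w ν) ↔ w ≠ 0 := by
  constructor
  · rintro hsurj rfl
    obtain ⟨h, hh⟩ := hsurj (Complex.I * c)
    have hI : ((⟪ν, h⟫ : ℝ) : ℂ) = Complex.I := by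
      have hc0 : c ≠ 0 := fun h => hc (by simp [h])
      refine mul_left_cancel₀ hc0 ?_
      simpa [mul_comm] using hh
    simpa using congrArg Complex.im hI
  · intro hw y
    have hw' : ‖w‖ ≠ 0 := norm_ne_zero_iff.mpr hw
    set b := y.im / c.im
    set a := (y.re - b * c.re) / ‖w‖ ^ 2
    refine ⟨a • w + b • ν, ?_⟩
    have hνh : ⟪ν, a • w + b • ν⟫ = b := by
      simp [inner_add_right, real_inner_smul_right, real_inner_comm w ν, hwν, hν]
    have hwh : ⟪w, a • w + b • ν⟫ = y.re - b * c.re := by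
      simp [a, inner_add_right, real_inner_smul_right, hwν, hw']
    rw [innerPair_apply, hνh, hwh]
    apply Complex.ext
    · simp only [Complex.add_re, Complex.ofReal_re, Complex.mul_re, Complex.ofReal_im]
      ring
    · simp only [Complex.add_im, Complex.ofReal_im, Complex.mul_im, Complex.ofReal_re, mul_zero,
        zero_add]
      exact mul_div_cancel₀ y.im hc

lemma innerPair_surjective_iff {ν : E} (hν : ‖ν‖ = 1) {z : ℂ} (hz : z.im ≠ 0) (u : E) :
    Function.Surjective (innerPair z u ν) ↔ u - ⟪ν, u⟫ • ν ≠ 0 := by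
  rw [innerPair_eq_sub_smul]
  refine innerPair_surjective_iff_of_inner_eq_zero hν ?_ (by simpa using hz)
  simp [inner_sub_left, real_inner_smul_left, hν, real_inner_comm u ν]

noncomputable def spectralParameter (ν ρ : E) (ε : ℝ) (z : ℂ) (ξ : E) : ℂ :=
  (ε : ℂ) - (‖ξ‖ : ℂ) ^ 2 - 2 * (z * (⟪ν, ξ⟫ : ℝ) + (⟪ρ, ξ⟫ : ℝ))

lemma hasFDerivAt_spectralParameter (ν ρ : E) (ε : ℝ) (z : ℂ) (ξ : E) :
    HasFDerivAt (spectralParameter ν ρ ε z) ((-2 : ℂ) • innerPair z (ξ + ρ) ν) ξ := by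
  have hnorm : HasFDerivAt (fun ξ : E => ((‖ξ‖ ^ 2 : ℝ) : ℂ))
      (Complex.ofRealCLM ∘L (2 • innerSL ℝ ξ)) ξ :=
    Complex.ofRealCLM.hasFDerivAt.comp ξ (hasStrictFDerivAt_norm_sq ξ).hasFDerivAt
  have hF : spectralParameter ν ρ ε z =
      fun ξ => (ε : ℂ) - ((‖ξ‖ ^ 2 : ℝ) : ℂ) - 2 * innerPair z ρ ν ξ := by
    funext ξ
    simp [spectralParameter, add_comm]
  rw [hF]
  refine (((hasFDerivAt_const (ε : ℂ) ξ).sub hnorm).sub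
    ((innerPair z ρ ν).hasFDerivAt.const_mul 2)).congr_fderiv ?_
  ext h
  simp only [sub_apply, zero_apply, smul_apply, ContinuousLinearMap.comp_apply, coe_innerSL_apply,
    Complex.ofRealCLM_apply, innerPair_apply, inner_add_left, smul_eq_mul, nsmul_eq_mul]
  push_cast
  ring

lemma fderiv_spectralParameter_surjective_iff {ν ρ : E} (hν : ‖ν‖ = 1) (hρ : ⟪ν, ρ⟫ = 0)
    (ε : ℝ) {z : ℂ} (hz : z.im ≠ 0) (ξ : E) :
    Function.Surjective (fderiv ℝ (spectralParameter ν ρ ε z) ξ) ↔ ξ - ⟪ν, ξ⟫ • ν ≠ -ρ := by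
  rw [(hasFDerivAt_spectralParameter ν ρ ε z ξ).fderiv]
  change Function.Surjective (((-2 : ℂ) • ·) ∘ innerPair z (ξ + ρ) ν) ↔ _
  rw [Function.Surjective.of_comp_iff' (MulAction.bijective₀ (by norm_num)),
    innerPair_surjective_iff hν hz, inner_add_right, hρ, add_zero, add_sub_right_comm, ne_eq,
    ne_eq, eq_neg_iff_add_eq_zero]

lemma spectralParameter_of_sub_smul_eq_neg {ν ρ : E} (hν : ‖ν‖ = 1) (hρ : ⟪ν, ρ⟫ = 0)
    (ε : ℝ) (z : ℂ) {ξ : E} (hξ : ξ - ⟪ν, ξ⟫ • ν = -ρ) :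
    spectralParameter ν ρ ε z ξ = ((ε + ‖ρ‖ ^ 2 - ⟪ν, ξ⟫ ^ 2 : ℝ) : ℂ) - 2 * z * ⟪ν, ξ⟫ := by
  have hξ' : ξ = ⟪ν, ξ⟫ • ν - ρ := by rw [sub_eq_add_neg, ← hξ]; abel
  have hnorm : ‖ξ‖ ^ 2 = ⟪ν, ξ⟫ ^ 2 + ‖ρ‖ ^ 2 := by
    conv_lhs => rw [hξ']
    rw [norm_sub_sq_real, real_inner_smul_left, hρ, norm_smul, hν, mul_one, Real.norm_eq_abs,
      sq_abs]
    ring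
  have hρξ : ⟪ρ, ξ⟫ = -‖ρ‖ ^ 2 := by
    conv_lhs => rw [hξ']
    rw [inner_sub_right, real_inner_smul_right, real_inner_comm ν ρ, hρ,
      real_inner_self_eq_norm_sq]
    ring
  rw [spectralParameter, ← Complex.ofReal_pow, hnorm, hρξ]
  push_cast
  ring

end SpectralParameter

theorem spectral_parameter_differential_surjective_general (k : ℕ)
    (ν : EuclideanSpace ℝ (Fin k)) (hν : ‖ν‖ = 1)
    (ρperp : EuclideanSpace ℝ (Fin k)) (hperp : ⟪ν, ρperp⟫ = 0)
    (ε : ℝ) (z : ℂ) (him : z.im ≠ 0)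
    (F : EuclideanSpace ℝ (Fin k) → ℂ)
    (hF : ∀ ξ, F ξ = (ε : ℂ) - (‖ξ‖ : ℂ) ^ 2 - 2 * (z * (⟪ν, ξ⟫ : ℝ) + (⟪ρperp, ξ⟫ : ℝ))) :
    (Differentiable ℝ F ∧
      ∀ ξ, Function.Surjective (fderiv ℝ F ξ) ↔ ξ - ⟪ν, ξ⟫ • ν ≠ -ρperp) ∧
    (∀ ξ, ξ - ⟪ν, ξ⟫ • ν = -ρperp → (F ξ).im = 0 →
      ⟪ν, ξ⟫ = 0 ∧ F ξ = (ε : ℂ) + (‖ρperp‖ : ℂ) ^ 2) := by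
  obtain rfl : F = SpectralParameter.spectralParameter ν ρperp ε z := funext hF
  refine ⟨⟨fun ξ => ?_, SpectralParameter.fderiv_spectralParameter_surjective_iff hν hperp ε him⟩,
    fun ξ hξ hIm => ?_⟩
  · exact (SpectralParameter.hasFDerivAt_spectralParameter ν ρperp ε z ξ).differentiableAt
  rw [SpectralParameter.spectralParameter_of_sub_smul_eq_neg hν hperp ε z hξ] at hIm ⊢
  rw [Complex.sub_im, Complex.ofReal_im] at hIm
  have ht : ⟪ν, ξ⟫ = 0 := by simpa [him] using hIm
  simp [ht]

/-- Differentiability and surjectivity of the differential of the spectral parameter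
`F(ξ) = ε − ‖ξ‖² − 2ρ·ξ`, `ρ = zν + ρ_⊥`, `Im z ≠ 0`: `dF(ξ) : ℝᵏ → ℂ ≅ ℝ²` is
surjective iff `ξ_⊥ ≠ −ρ_⊥`, and at `ξ_⊥ = −ρ_⊥` with `F(ξ)` real one has `⟨ν,ξ⟩ = 0`
and `F(ξ) = ε + ‖ρ_⊥‖²`. -/
theorem spectral_parameter_differential_surjective (k : ℕ) (hk : 1 ≤ k)
    (ν : EuclideanSpace ℝ (Fin k)) (hν : ‖ν‖ = 1)
    (ρperp : EuclideanSpace ℝ (Fin k)) (hperp : ⟪ν, ρperp⟫ = 0)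
    (ε : ℝ) (z : ℂ) (him : z.im ≠ 0)
    (F : EuclideanSpace ℝ (Fin k) → ℂ)
    (hF : ∀ ξ, F ξ = (ε : ℂ) - (‖ξ‖ : ℂ) ^ 2 - 2 * (z * (⟪ν, ξ⟫ : ℝ) + (⟪ρperp, ξ⟫ : ℝ))) :
    (Differentiable ℝ F ∧
      ∀ ξ, Function.Surjective (fderiv ℝ F ξ) ↔ ξ - ⟪ν, ξ⟫ • ν ≠ -ρperp) ∧
    (∀ ξ, ξ - ⟪ν, ξ⟫ • ν = -ρperp → (F ξ).im = 0 →
      ⟪ν, ξ⟫ = 0 ∧ F ξ = (ε : ℂ) + (‖ρperp‖ : ℂ) ^ 2) :=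
  spectral_parameter_differential_surjective_general k ν hν ρperp hperp ε z him F hF
end
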